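/- arXiv:1309.4814 — 4 statements merged into one kernel-verified Lean document; each statement's English description precedes it below -/
import Mathlib

section
/- Let p be a prime, R = 𝔽_p[x₁,…,xₙ], J ⊆ R an ideal, g ∈ R, and e ∈ ℕ. Then g ∉ J^{[p^e]} if and only if there exists an e-Frobenius-linear map ψ : R → R with ψ(g) ∉ J. -/
/-- The Frobenius power `J^{[q]}`: the ideal generated by `q`-th powers of elements of `J`. -/
def frobeniusPower {R : Type*} [CommRing R] (J : Ideal R) (q : ℕ) : Ideal R :=
  Ideal.span ((fun g => g ^ q) '' (J : Set R))

/-- An additive map `ψ : R → R` is `e`-Frobenius-linear if `ψ(r^{pᵉ}·s) = r·ψ(s)`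
for all `r, s`. -/
def IsFrobeniusLinear (p n e : ℕ)
    (ψ : MvPolynomial (Fin n) (ZMod p) → MvPolynomial (Fin n) (ZMod p)) : Prop :=
  (∀ x y, ψ (x + y) = ψ x + ψ y) ∧ ∀ r s, ψ (r ^ p ^ e * s) = r * ψ s

/-- The test ideal `τ(f^{a/pᵉ})`: the ideal generated by the images `ψ(f^a)` over all
`e`-Frobenius-linear maps `ψ`. -/
noncomputable def testIdeal (p n : ℕ) (f : MvPolynomial (Fin n) (ZMod p)) (a e : ℕ) :
    Ideal (MvPolynomial (Fin n) (ZMod p)) :=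
  Ideal.span {y | ∃ ψ, IsFrobeniusLinear p n e ψ ∧ ψ (f ^ a) = y}

/-!
Write `q = pᵉ`. For `b : σ →₀ ℕ`, the map `ψ_b = frobeniusComponent q b` keeps the monomials
`x^m` with `m ≡ b (mod q)` and sends them to `x^⌊m/q⌋`; it satisfies `ψ_b(r^q s) = r ψ_b(s)`
because over `𝔽_p` the `q`-th power of `r` is `expand q r`. Grouping the monomials of `g` by
their exponents modulo `q` gives `g = ∑_b ψ_b(g)^q x^b`, so if every Frobenius-linear map sends
`g` into `J`, then `g ∈ J^{[q]}`. Conversely a Frobenius-linear `ψ` sends `h^q s` to `h ψ(s)`,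
hence maps `J^{[q]}` into `J`.
-/

open MvPolynomial Finset

section FrobeniusComponent

variable {σ R : Type*} [CommSemiring R]

open Classical in
noncomputable def frobeniusComponent (q : ℕ) (b : σ →₀ ℕ) :
    MvPolynomial σ R →ₗ[R] MvPolynomial σ R :=
  (basisMonomials σ R).constr R fun m =>
    if m.mapRange (· % q) (Nat.zero_mod q) = b then
      monomial (m.mapRange (· / q) (Nat.zero_div q)) 1
    else 0

open Classical in
theorem frobeniusComponent_monomial (q : ℕ) (b m : σ →₀ ℕ) (c : R) :
    frobeniusComponent q b (monomial m c) =
      if m.mapRange (· % q) (Nat.zero_mod q) = b then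
        monomial (m.mapRange (· / q) (Nat.zero_div q)) c
      else 0 := by
  have hbasis : monomial m (1 : R) = basisMonomials σ R m := by rw [coe_basisMonomials]
  rw [← mul_one c, ← smul_eq_mul, ← smul_monomial, map_smul, hbasis, frobeniusComponent,
    Module.Basis.constr_basis]
  split_ifs <;> simp [smul_monomial]

theorem mapRange_mod_smul_add (q : ℕ) (a m : σ →₀ ℕ) :
    (q • a + m).mapRange (· % q) (Nat.zero_mod q) = m.mapRange (· % q) (Nat.zero_mod q) := by
  ext i
  simp

theorem mapRange_div_smul_add {q : ℕ} (hq : 0 < q) (a m : σ →₀ ℕ) :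
    (q • a + m).mapRange (· / q) (Nat.zero_div q) =
      a + m.mapRange (· / q) (Nat.zero_div q) := by
  ext i
  simp [Nat.mul_add_div hq]

theorem smul_mapRange_div_add_mapRange_mod (q : ℕ) (m : σ →₀ ℕ) :
    q • m.mapRange (· / q) (Nat.zero_div q) + m.mapRange (· % q) (Nat.zero_mod q) = m := by
  ext i
  simp [Nat.div_add_mod]

theorem frobeniusComponent_expand_mul {q : ℕ} (hq : 0 < q) (b : σ →₀ ℕ)
    (r s : MvPolynomial σ R) :
    frobeniusComponent q b (expand q r * s) = r * frobeniusComponent q b s := by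
  induction s using MvPolynomial.induction_on' with
  | add s t hs ht => rw [mul_add, map_add, hs, ht, map_add, mul_add]
  | monomial m d =>
    induction r using MvPolynomial.induction_on' with
    | add r r' hr hr' => rw [map_add, add_mul, map_add, hr, hr', add_mul]
    | monomial a c =>
      rw [expand_monomial, monomial_mul, frobeniusComponent_monomial,
        frobeniusComponent_monomial, mapRange_mod_smul_add, mapRange_div_smul_add hq]
      split_ifs <;> simp [monomial_mul]

theorem sum_expand_frobeniusComponent_monomial_mul_monomial (q : ℕ) (m : σ →₀ ℕ) (c : R)
    {S : Finset (σ →₀ ℕ)} (hm : m.mapRange (· % q) (Nat.zero_mod q) ∈ S) :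
    ∑ b ∈ S, expand q (frobeniusComponent q b (monomial m c)) * monomial b 1 =
      monomial m c := by
  rw [sum_eq_single_of_mem _ hm fun b _ hb => by
    rw [frobeniusComponent_monomial, if_neg (Ne.symm hb), map_zero, zero_mul]]
  rw [frobeniusComponent_monomial, if_pos rfl, expand_monomial, monomial_mul, mul_one,
    smul_mapRange_div_add_mapRange_mod]

theorem sum_expand_frobeniusComponent_mul_monomial (q : ℕ) (f : MvPolynomial σ R)
    {S : Finset (σ →₀ ℕ)}
    (hS : ∀ m ∈ f.support, m.mapRange (· % q) (Nat.zero_mod q) ∈ S) :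
    ∑ b ∈ S, expand q (frobeniusComponent q b f) * monomial b 1 = f := by
  calc _ = ∑ b ∈ S, ∑ m ∈ f.support,
          expand q (frobeniusComponent q b (monomial m (coeff m f))) * monomial b 1 := by
        conv_lhs => rw [f.as_sum]
        simp only [map_sum, sum_mul]
    _ = ∑ m ∈ f.support,
          ∑ b ∈ S, expand q (frobeniusComponent q b (monomial m (coeff m f))) * monomial b 1 :=
        sum_comm
    _ = f := by
        conv_rhs => rw [f.as_sum]
        exact sum_congr rfl fun m hm =>
          sum_expand_frobeniusComponent_monomial_mul_monomial q m _ (hS m hm)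

end FrobeniusComponent

theorem map_mem_of_mem_frobeniusPower {R : Type*} [CommRing R] {J : Ideal R} {q : ℕ}
    (ψ : R →+ R) (hψ : ∀ r s, ψ (r ^ q * s) = r * ψ s) {g : R}
    (hg : g ∈ frobeniusPower J q) : ψ g ∈ J := by
  -- `ψ` is only additive, so the span induction needs the claim for all multiples `a * g`.
  suffices ∀ a, ψ (a * g) ∈ J by simpa using this 1
  induction hg using Submodule.span_induction with
  | mem x hx =>
    obtain ⟨h, hh, rfl⟩ := hx
    intro a
    rw [mul_comm, hψ]
    exact J.mul_mem_right _ hh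
  | zero => simp
  | add x y _ _ hx hy =>
    intro a
    rw [mul_add, map_add]
    exact J.add_mem (hx a) (hy a)
  | smul c x _ hx =>
    intro a
    rw [smul_eq_mul, ← mul_assoc]
    exact hx _

section ZMod

variable {p : ℕ} [Fact p.Prime]

theorem expand_zmod_pow {σ : Type*} (e : ℕ) (f : MvPolynomial σ (ZMod p)) :
    expand (p ^ e) f = f ^ p ^ e := by
  rw [← map_iterateFrobenius_expand p, Subsingleton.elim (iterateFrobenius (ZMod p) p e)
    (RingHom.id _), map_id]

theorem isFrobeniusLinear_frobeniusComponent (n e : ℕ) (b : Fin n →₀ ℕ) :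
    IsFrobeniusLinear p n e (frobeniusComponent (p ^ e) b) :=
  ⟨map_add _, fun r s => by
    rw [← expand_zmod_pow, frobeniusComponent_expand_mul (pow_pos (Fact.out : p.Prime).pos e)]⟩

theorem mem_frobeniusPower_of_forall_frobeniusComponent_mem {σ : Type*} {e : ℕ}
    {J : Ideal (MvPolynomial σ (ZMod p))} {g : MvPolynomial σ (ZMod p)}
    (h : ∀ b, frobeniusComponent (p ^ e) b g ∈ J) : g ∈ frobeniusPower J (p ^ e) := by
  classical
  rw [← sum_expand_frobeniusComponent_mul_monomial (p ^ e) g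
    (S := g.support.image (Finsupp.mapRange (· % p ^ e) (Nat.zero_mod _)))
    fun m hm => mem_image_of_mem _ hm]
  refine Ideal.sum_mem _ fun b _ => Ideal.mul_mem_right _ _ ?_
  rw [expand_zmod_pow]
  exact Ideal.subset_span ⟨_, h b, rfl⟩

end ZMod

theorem not_mem_frobeniusPower_iff_exists_frobLinear (p n e : ℕ) (hp : p.Prime)
    (J : Ideal (MvPolynomial (Fin n) (ZMod p))) (g : MvPolynomial (Fin n) (ZMod p)) :
    g ∉ frobeniusPower J (p ^ e) ↔
      ∃ ψ, IsFrobeniusLinear p n e ψ ∧ ψ g ∉ J := by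
  have := Fact.mk hp
  constructor
  · intro hg
    by_contra! h
    exact hg (mem_frobeniusPower_of_forall_frobeniusComponent_mem fun b =>
      h _ (isFrobeniusLinear_frobeniusComponent n e b))
  · rintro ⟨ψ, ⟨hadd, hlin⟩, hψg⟩ hg
    exact hψg (map_mem_of_mem_frobeniusPower (AddMonoidHom.mk' ψ hadd) hlin hg)
end

section
/- Let p be a prime, R = 𝔽_p[x₁,…,xₙ], f ∈ R, and a, e ∈ ℕ. Then the test ideal is independent of the representation of the exponent a/p^e = ap/p^{e+1}: the ideal generated by {ψ(f^a) : ψ e-Frobenius-linear} equals the ideal generated by {φ(f^{ap}) : φ (e+1)-Frobenius-linear}, i.e., τ(f^{a/p^e}) = τ(f^{ap/p^{e+1}}). -/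
/-!
An `e`-Frobenius-linear map `ψ` yields the `(e+1)`-Frobenius-linear map `ψ ∘ Φ`, where `Φ` is the
standard Frobenius splitting of `𝔽_p[x]` sending `x^{pm}` to `x^m` and every other monomial to `0`;
since `Φ((f^a)^p) = f^a`, it takes the same value at `f^{ap}` as `ψ` at `f^a`. Conversely an
`(e+1)`-Frobenius-linear map `φ` yields the `e`-Frobenius-linear map `s ↦ φ(s^p)`, with value
`φ(f^{ap})` at `f^a`. So both test ideals are spanned by the same set.
-/

open MvPolynomial

namespace MvPolynomial

variable {σ : Type*} (p : ℕ) [NeZero p]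

noncomputable def frobeniusSplitting : MvPolynomial σ (ZMod p) →+ MvPolynomial σ (ZMod p) :=
  AddMonoidHom.mk'
    (fun g => AddMonoidAlgebra.ofCoeff <| Finsupp.comapDomain (p • ·) (AddMonoidAlgebra.coeff g)
      (IsAddTorsionFree.nsmul_right_injective (NeZero.ne p)).injOn)
    fun f g => by ext m; rfl

theorem coeff_frobeniusSplitting (g : MvPolynomial σ (ZMod p)) (m : σ →₀ ℕ) :
    coeff m (frobeniusSplitting p g) = coeff (p • m) g :=
  rfl

theorem frobeniusSplitting_one : frobeniusSplitting p (1 : MvPolynomial σ (ZMod p)) = 1 := by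
  classical
  ext m
  rw [coeff_frobeniusSplitting, coeff_one, coeff_one]
  exact if_congr (by rw [eq_comm, smul_eq_zero_iff_right (NeZero.ne p), eq_comm]) rfl rfl

variable [Fact p.Prime]

theorem frobeniusSplitting_pow_mul (r s : MvPolynomial σ (ZMod p)) :
    frobeniusSplitting p (r ^ p * s) = r * frobeniusSplitting p s := by
  induction r using MvPolynomial.induction_on' with
  | monomial u c =>
    ext m
    have hle : p • u ≤ p • m ↔ u ≤ m := by simp [Finsupp.le_def, Nat.pos_of_neZero p]
    have hsub : p • m - p • u = p • (m - u) := by ext; simp [Nat.mul_sub]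
    rw [monomial_pow, ZMod.pow_card, coeff_frobeniusSplitting, coeff_monomial_mul',
      coeff_monomial_mul', coeff_frobeniusSplitting, hsub]
    exact if_congr hle rfl rfl
  | add r₁ r₂ h₁ h₂ => rw [add_pow_char, add_mul, map_add, h₁, h₂, add_mul]

theorem frobeniusSplitting_pow (r : MvPolynomial σ (ZMod p)) :
    frobeniusSplitting p (r ^ p) = r := by
  simpa [frobeniusSplitting_one] using frobeniusSplitting_pow_mul p r 1

end MvPolynomial

namespace IsFrobeniusLinear

variable {p n e : ℕ} [Fact p.Prime]

theorem comp_frobeniusSplitting {ψ : MvPolynomial (Fin n) (ZMod p) → MvPolynomial (Fin n) (ZMod p)}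
    (hψ : IsFrobeniusLinear p n e ψ) : IsFrobeniusLinear p n (e + 1) (ψ ∘ frobeniusSplitting p) := by
  refine ⟨fun x y => by simp only [Function.comp_apply, map_add, hψ.1], fun r s => ?_⟩
  rw [Function.comp_apply, pow_succ, pow_mul, frobeniusSplitting_pow_mul, hψ.2, Function.comp_apply]

theorem comp_frobenius {φ : MvPolynomial (Fin n) (ZMod p) → MvPolynomial (Fin n) (ZMod p)}
    (hφ : IsFrobeniusLinear p n (e + 1) φ) : IsFrobeniusLinear p n e (fun s => φ (s ^ p)) :=
  ⟨fun x y => by dsimp only; rw [add_pow_char, hφ.1],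
    fun r s => by dsimp only; rw [mul_pow, ← pow_mul, ← pow_succ, hφ.2]⟩

end IsFrobeniusLinear

theorem testIdeal_indep_of_representation (p n : ℕ) (hp : p.Prime)
    (f : MvPolynomial (Fin n) (ZMod p)) (a e : ℕ) :
    testIdeal p n f a e = testIdeal p n f (a * p) (e + 1) := by
  have : Fact p.Prime := ⟨hp⟩
  refine congrArg Ideal.span (Set.ext fun y => ⟨?_, ?_⟩)
  · rintro ⟨ψ, hψ, rfl⟩
    exact ⟨_, hψ.comp_frobeniusSplitting, by rw [Function.comp_apply, pow_mul, frobeniusSplitting_pow]⟩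
  · rintro ⟨φ, hφ, rfl⟩
    exact ⟨_, hφ.comp_frobenius, by rw [← pow_mul]⟩
end

section
/- Let p be a prime, R = 𝔽_p[x₁,…,xₙ], f ∈ R nonzero, and a, e ∈ ℕ. Then there exists N ≥ e such that for all n ≥ N one has τ(f^{(a·p^{n−e} + 1)/p^n}) = τ(f^{(a·p^{n−e})/p^n}); that is, for c = a/p^e, τ(f^{c + 1/p^n}) = τ(f^c) for all sufficiently large n. -/
/-!
Write `q = pᵉ` and expand `g = ∑_{0 ≤ α < q} g_α^q x^α`. The `q`-th roots `g_α` are additive and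
satisfy `(s^q r)_α = s r_α`, so `τ(g^{1/q})` is the ideal they generate, which is also the smallest
ideal `J` with `g ∈ J^{[q]}`. Once `q' = pʲ` exceeds the degree of `f ≠ 0`, the root `f_β` at a
monomial `x^β` of `f` is a nonzero constant, and extracting it shows
`τ((h^{q'} f)^{1/(q q')}) = τ(h^{1/q})` for every `h`. Taking `h = f^a`, with `f` replaced by `1` on the
right-hand side, both test ideals in the theorem equal `τ(f^{a/pᵉ})`.
-/

open MvPolynomial

section FrobeniusPower

variable {R : Type*} [CommRing R]

theorem pow_mem_frobeniusPower {J : Ideal R} {x : R} (hx : x ∈ J) (q : ℕ) :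
    x ^ q ∈ frobeniusPower J q :=
  Ideal.subset_span ⟨x, hx, rfl⟩

theorem frobeniusPower_mono {J K : Ideal R} (h : J ≤ K) (q : ℕ) :
    frobeniusPower J q ≤ frobeniusPower K q :=
  Ideal.span_mono (Set.image_mono h)

variable (p : ℕ) [ExpChar R p]

theorem frobeniusPower_eq_map (J : Ideal R) (e : ℕ) :
    frobeniusPower J (p ^ e) = J.map (iterateFrobenius R p e) :=
  rfl

theorem frobeniusPower_frobeniusPower (J : Ideal R) (e j : ℕ) :
    frobeniusPower (frobeniusPower J (p ^ e)) (p ^ j) = frobeniusPower J (p ^ (j + e)) := by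
  simp only [frobeniusPower_eq_map, Ideal.map_map, iterateFrobenius_add]

end FrobeniusPower

section Residues

variable {σ : Type*} (q : ℕ)

theorem eq_of_smul_add_eq_smul_add {α α' γ γ' : σ →₀ ℕ} (hα : ∀ i, α i < q)
    (hα' : ∀ i, α' i < q) (h : q • γ + α = q • γ' + α') : α = α' := by
  ext i
  have hi := DFunLike.congr_fun h i
  simp only [Finsupp.add_apply, Finsupp.smul_apply, smul_eq_mul] at hi
  rw [← Nat.mod_eq_of_lt (hα i), ← Nat.mod_eq_of_lt (hα' i), ← Nat.mul_add_mod_self_left q (γ i),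
    hi, Nat.mul_add_mod_self_left]

variable (σ) [Finite σ]

theorem finite_residues : {α : σ →₀ ℕ | ∀ i, α i < q}.Finite := by
  classical
  refine (Set.finite_Iic (Finsupp.equivFunOnFinite.symm fun _ => q)).subset fun α hα => ?_
  exact Finsupp.le_def.mpr fun i => (hα i).le

noncomputable def residueBox : Finset (σ →₀ ℕ) :=
  (finite_residues σ q).toFinset

variable {σ q}

theorem mem_residueBox {α : σ →₀ ℕ} : α ∈ residueBox σ q ↔ ∀ i, α i < q :=
  Set.Finite.mem_toFinset _

end Residues

section FrobeniusRoot

variable {σ K : Type*} [CommSemiring K] (q : ℕ) [NeZero q]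

theorem smul_add_injective (α : σ →₀ ℕ) : Function.Injective fun γ : σ →₀ ℕ => q • γ + α :=
  (add_left_injective α).comp (nsmul_right_injective (NeZero.ne q))

noncomputable def frobeniusRoot (α : σ →₀ ℕ) : MvPolynomial σ K →ₗ[K] MvPolynomial σ K :=
  (AddMonoidAlgebra.coeffLinearEquiv K).symm.toLinearMap ∘ₗ
    Finsupp.lcomapDomain _ (smul_add_injective q α) ∘ₗ
    (AddMonoidAlgebra.coeffLinearEquiv K).toLinearMap

theorem coeff_frobeniusRoot (α γ : σ →₀ ℕ) (g : MvPolynomial σ K) :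
    coeff γ (frobeniusRoot q α g) = coeff (q • γ + α) g :=
  rfl

theorem frobeniusRoot_monomial_smul_add (α γ : σ →₀ ℕ) (c : K) :
    frobeniusRoot q α (monomial (q • γ + α) c) = monomial γ c := by
  classical
  ext γ'
  simp only [coeff_frobeniusRoot, coeff_monomial, (smul_add_injective q α).eq_iff]

theorem frobeniusRoot_monomial_of_forall_ne {α β : σ →₀ ℕ} (h : ∀ γ, q • γ + α ≠ β) (c : K) :
    frobeniusRoot q α (monomial β c) = 0 := by
  classical
  ext γ
  rw [coeff_frobeniusRoot, coeff_monomial, if_neg (h γ).symm, coeff_zero]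

theorem frobeniusRoot_monomial_smul_mul {α : σ →₀ ℕ} (hα : ∀ i, α i < q) (δ : σ →₀ ℕ) (c : K)
    (r : MvPolynomial σ K) :
    frobeniusRoot q α (monomial (q • δ) c * r) = monomial δ c * frobeniusRoot q α r := by
  ext γ
  simp only [coeff_frobeniusRoot, coeff_monomial_mul']
  have hle : q • δ ≤ q • γ + α ↔ δ ≤ γ := by
    simp only [Finsupp.le_def, Finsupp.add_apply, Finsupp.smul_apply, smul_eq_mul]
    refine forall_congr' fun i => ⟨fun h => ?_, fun h => ?_⟩
    · by_contra! hlt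
      nlinarith [hα i]
    · nlinarith
  by_cases hδγ : δ ≤ γ
  · rw [if_pos (hle.mpr hδγ), if_pos hδγ]
    congr 2
    ext i
    simp only [Finsupp.tsub_apply, Finsupp.add_apply, Finsupp.smul_apply, smul_eq_mul,
      Nat.mul_sub, Nat.sub_add_comm (Nat.mul_le_mul_left q (hδγ i))]
  · rw [if_neg (hle.not.mpr hδγ), if_neg hδγ]

theorem frobeniusRoot_eq_C {g : MvPolynomial σ K} (hg : g.totalDegree < q) (α : σ →₀ ℕ) :
    frobeniusRoot q α g = C (coeff α g) := by
  classical
  ext γ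
  rw [coeff_frobeniusRoot, coeff_C]
  split_ifs with hγ
  · rw [← hγ, smul_zero, zero_add]
  · apply coeff_eq_zero_of_totalDegree_lt
    obtain ⟨i, hi⟩ := Finsupp.ne_iff.mp (Ne.symm hγ)
    calc g.totalDegree < q := hg
      _ ≤ (q • γ + α) i := by
        simp only [Finsupp.add_apply, Finsupp.smul_apply, smul_eq_mul]
        nlinarith [Nat.pos_of_ne_zero hi]
      _ ≤ (q • γ + α).degree := Finsupp.le_degree i _

/-- The ideal `g^{[1/q]}` of Blickle–Mustață–Smith. -/
noncomputable def rootIdeal (g : MvPolynomial σ K) : Ideal (MvPolynomial σ K) :=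
  Ideal.span ((fun α => frobeniusRoot q α g) '' {α | ∀ i, α i < q})

theorem frobeniusRoot_mem_rootIdeal {α : σ →₀ ℕ} (hα : ∀ i, α i < q) (g : MvPolynomial σ K) :
    frobeniusRoot q α g ∈ rootIdeal q g :=
  Ideal.subset_span ⟨α, hα, rfl⟩

end FrobeniusRoot

section PrimeField

variable {σ : Type*} {p : ℕ} [Fact p.Prime]

theorem frobeniusRoot_pow_mul (e : ℕ) {α : σ →₀ ℕ} (hα : ∀ i, α i < p ^ e)
    (s r : MvPolynomial σ (ZMod p)) :
    frobeniusRoot (p ^ e) α (s ^ p ^ e * r) = s * frobeniusRoot (p ^ e) α r := by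
  induction s using MvPolynomial.induction_on' with
  | monomial δ c =>
    rw [monomial_pow, ZMod.pow_card_pow, frobeniusRoot_monomial_smul_mul _ hα]
  | add s₁ s₂ ih₁ ih₂ =>
    rw [add_pow_char_pow, add_mul, map_add, ih₁, ih₂, add_mul]

theorem frobeniusRoot_mem_of_mem_frobeniusPower (e : ℕ) {α : σ →₀ ℕ} (hα : ∀ i, α i < p ^ e)
    {J : Ideal (MvPolynomial σ (ZMod p))} {y : MvPolynomial σ (ZMod p)}
    (hy : y ∈ frobeniusPower J (p ^ e)) : frobeniusRoot (p ^ e) α y ∈ J := by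
  suffices ∀ r, frobeniusRoot (p ^ e) α (r * y) ∈ J by simpa using this 1
  induction hy using Submodule.span_induction with
  | mem x hx =>
    obtain ⟨u, hu, rfl⟩ := hx
    intro r
    rw [mul_comm, frobeniusRoot_pow_mul e hα]
    exact J.mul_mem_right _ hu
  | zero => simp
  | add x z _ _ ihx ihz =>
    intro r
    rw [mul_add, map_add]
    exact J.add_mem (ihx r) (ihz r)
  | smul t x _ ih =>
    intro r
    rw [smul_eq_mul, ← mul_assoc]
    exact ih (r * t)

variable [Finite σ]

theorem sum_frobeniusRoot_pow_mul_monomial (e : ℕ) (g : MvPolynomial σ (ZMod p)) :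
    ∑ α ∈ residueBox σ (p ^ e), frobeniusRoot (p ^ e) α g ^ p ^ e * monomial α 1 = g := by
  set q := p ^ e
  induction g using MvPolynomial.induction_on' with
  | monomial u c =>
    set γ₀ : σ →₀ ℕ := Finsupp.mapRange (· / q) (Nat.zero_div q) u
    set α₀ : σ →₀ ℕ := Finsupp.mapRange (· % q) (Nat.zero_mod q) u
    have hα₀ : ∀ i, α₀ i < q := fun i => Nat.mod_lt _ (Nat.pos_of_neZero q)
    have hu : q • γ₀ + α₀ = u := by
      ext i
      exact Nat.div_add_mod (u i) q
    rw [Finset.sum_eq_single_of_mem α₀ (mem_residueBox.mpr hα₀), ← hu,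
      frobeniusRoot_monomial_smul_add, monomial_pow, monomial_mul, ZMod.pow_card_pow, mul_one]
    intro α hα hne
    rw [frobeniusRoot_monomial_of_forall_ne, zero_pow (NeZero.ne q), zero_mul]
    exact fun γ h => hne (eq_of_smul_add_eq_smul_add q (mem_residueBox.mp hα) hα₀ (h.trans hu.symm))
  | add g₁ g₂ ih₁ ih₂ =>
    simp only [map_add, add_pow_char_pow, add_mul, Finset.sum_add_distrib, ih₁, ih₂]

theorem mem_frobeniusPower_rootIdeal (e : ℕ) (g : MvPolynomial σ (ZMod p)) :
    g ∈ frobeniusPower (rootIdeal (p ^ e) g) (p ^ e) := by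
  have hsum : ∑ α ∈ residueBox σ (p ^ e), frobeniusRoot (p ^ e) α g ^ p ^ e * monomial α 1 ∈
      frobeniusPower (rootIdeal (p ^ e) g) (p ^ e) :=
    Ideal.sum_mem _ fun α hα => Ideal.mul_mem_right _ _
      (pow_mem_frobeniusPower (frobeniusRoot_mem_rootIdeal _ (mem_residueBox.mp hα) g) _)
  rwa [sum_frobeniusRoot_pow_mul_monomial] at hsum

theorem rootIdeal_le_iff (e : ℕ) {g : MvPolynomial σ (ZMod p)}
    {J : Ideal (MvPolynomial σ (ZMod p))} :
    rootIdeal (p ^ e) g ≤ J ↔ g ∈ frobeniusPower J (p ^ e) := by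
  refine ⟨fun h => frobeniusPower_mono h _ (mem_frobeniusPower_rootIdeal e g), fun h => ?_⟩
  rw [rootIdeal, Ideal.span_le]
  rintro _ ⟨α, hα, rfl⟩
  exact frobeniusRoot_mem_of_mem_frobeniusPower e hα h

theorem rootIdeal_pow_mul_eq {f : MvPolynomial σ (ZMod p)} (hf : f ≠ 0) {j : ℕ}
    (hj : f.totalDegree < p ^ j) (e : ℕ) (h : MvPolynomial σ (ZMod p)) :
    rootIdeal (p ^ (j + e)) (h ^ p ^ j * f) = rootIdeal (p ^ e) h := by
  apply le_antisymm
  · rw [rootIdeal_le_iff, ← frobeniusPower_frobeniusPower]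
    exact Ideal.mul_mem_right _ _ (pow_mem_frobeniusPower (mem_frobeniusPower_rootIdeal e h) _)
  · rw [rootIdeal_le_iff]
    obtain ⟨β, hβ⟩ := ne_zero_iff.mp hf
    have hβj : ∀ i, β i < p ^ j := fun i =>
      ((Finsupp.le_degree i β).trans (le_totalDegree (mem_support_iff.mpr hβ))).trans_lt hj
    have hroot := frobeniusRoot_mem_of_mem_frobeniusPower j hβj
      (J := frobeniusPower (rootIdeal (p ^ (j + e)) (h ^ p ^ j * f)) (p ^ e))
      (by rw [frobeniusPower_frobeniusPower]; exact mem_frobeniusPower_rootIdeal _ _)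
    rwa [frobeniusRoot_pow_mul j hβj, frobeniusRoot_eq_C _ hj,
      Ideal.mul_unit_mem_iff_mem _ (hβ.isUnit.map C)] at hroot

end PrimeField

theorem testIdeal_eq_rootIdeal {p n : ℕ} [Fact p.Prime] (f : MvPolynomial (Fin n) (ZMod p))
    (a e : ℕ) : testIdeal p n f a e = rootIdeal (p ^ e) (f ^ a) := by
  apply le_antisymm
  · rw [testIdeal, Ideal.span_le]
    rintro _ ⟨ψ, ⟨hadd, hlin⟩, rfl⟩
    obtain ⟨ψ, rfl⟩ : ∃ ψ' : MvPolynomial (Fin n) (ZMod p) →+ _, ⇑ψ' = ψ :=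
      ⟨AddMonoidHom.mk' ψ hadd, rfl⟩
    rw [← congrArg ψ (sum_frobeniusRoot_pow_mul_monomial e (f ^ a)), map_sum]
    refine Ideal.sum_mem _ fun α hα => ?_
    rw [hlin]
    exact Ideal.mul_mem_right _ _ (frobeniusRoot_mem_rootIdeal _ (mem_residueBox.mp hα) _)
  · rw [rootIdeal, Ideal.span_le]
    rintro _ ⟨α, hα, rfl⟩
    exact Ideal.subset_span ⟨_, ⟨map_add _, frobeniusRoot_pow_mul e hα⟩, rfl⟩

theorem testIdeal_stabilizes (p n : ℕ) (hp : p.Prime)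
    (f : MvPolynomial (Fin n) (ZMod p)) (hf : f ≠ 0) (a e : ℕ) :
    ∃ N : ℕ, e ≤ N ∧ ∀ m : ℕ, N ≤ m →
      testIdeal p n f (a * p ^ (m - e) + 1) m = testIdeal p n f (a * p ^ (m - e)) m := by
  have := Fact.mk hp
  obtain ⟨j, hj⟩ : ∃ j, f.totalDegree < p ^ j := ⟨_, Nat.lt_pow_self hp.one_lt⟩
  refine ⟨j + e, Nat.le_add_left e j, fun m hm => ?_⟩
  obtain ⟨k, rfl⟩ : ∃ k, m = k + e := ⟨m - e, by omega⟩
  have hk : f.totalDegree < p ^ k := hj.trans_le (Nat.pow_le_pow_right hp.pos (by omega))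
  have h1 : (1 : MvPolynomial (Fin n) (ZMod p)).totalDegree < p ^ k := by
    rw [totalDegree_one]; exact pow_pos hp.pos k
  rw [Nat.add_sub_cancel, testIdeal_eq_rootIdeal, testIdeal_eq_rootIdeal, pow_succ, pow_mul,
    rootIdeal_pow_mul_eq hf hk, ← mul_one ((f ^ a) ^ p ^ k), rootIdeal_pow_mul_eq one_ne_zero h1]
end

section
/- (Briançon–Skoda for test ideals) Let p be a prime, R = 𝔽_p[x₁,…,xₙ], f ∈ R, and a, e ∈ ℕ. Then τ(f^{(a + p^e)/p^e}) = (f) · τ(f^{a/p^e}); that is, increasing the exponent c = a/p^e by 1 multiplies the test ideal by the principal ideal (f). -/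
theorem IsFrobeniusLinear.map_pow_add_pow {p n e : ℕ}
    {ψ : MvPolynomial (Fin n) (ZMod p) → MvPolynomial (Fin n) (ZMod p)}
    (hψ : IsFrobeniusLinear p n e ψ) (f : MvPolynomial (Fin n) (ZMod p)) (a : ℕ) :
    ψ (f ^ (a + p ^ e)) = f * ψ (f ^ a) := by
  rw [pow_add, mul_comm, hψ.2]

theorem testIdeal_add_one_general (p n : ℕ)
    (f : MvPolynomial (Fin n) (ZMod p)) (a e : ℕ) :
    testIdeal p n f (a + p ^ e) e = Ideal.span {f} * testIdeal p n f a e := by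
  rw [testIdeal, testIdeal, Ideal.span_mul_span', Set.singleton_mul]
  congr 1
  ext y
  constructor
  · rintro ⟨ψ, hψ, rfl⟩
    exact ⟨ψ (f ^ a), ⟨ψ, hψ, rfl⟩, (hψ.map_pow_add_pow f a).symm⟩
  · rintro ⟨_, ⟨ψ, hψ, rfl⟩, rfl⟩
    exact ⟨ψ, hψ, hψ.map_pow_add_pow f a⟩

theorem testIdeal_add_one (p n : ℕ) (hp : p.Prime)
    (f : MvPolynomial (Fin n) (ZMod p)) (a e : ℕ) :
    testIdeal p n f (a + p ^ e) e = Ideal.span {f} * testIdeal p n f a e :=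
  testIdeal_add_one_general p n f a e
end
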